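/- In the splittable congestion game, assume each utility u_n : ℝ^T → ℝ is concave and each resource cost c_t : ℝ → ℝ is convex, nondecreasing and β_t-strongly increasing with β_t > 0, i.e. (c_t(a) − c_t(b))·(a − b) ≥ β_t·(a − b)² for all a, b ∈ ℝ. Then Φ is β-aggregatively strongly monotone on X with β = min_{t} β_t: for all x, y ∈ X, g ∈ Φ(x) and h ∈ Φ(y), ∑_{n=1}^N ⟨g_n − h_n, x_n − y_n⟩ ≥ N·β·‖x̄ − ȳ‖², where x̄ = (1/N)∑_n x_n and ȳ = (1/N)∑_n y_n. -/

import Mathlib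

open scoped RealInnerProductSpace

noncomputable section

/-- `ℝ^T`. -/
abbrev Vec (T : ℕ) := EuclideanSpace ℝ (Fin T)

/-- The subdifferential of `φ : E → ℝ` at `x`. -/
def subdiff {E : Type*} [NormedAddCommGroup E] [InnerProductSpace ℝ E]
    (φ : E → ℝ) (x : E) : Set E :=
  {g | ∀ y, φ x + ⟪g, y - x⟫ ≤ φ y}

/-- Profiles `(ℝ^T)^N` with the norm `‖x‖² = ∑ₙ ‖xₙ‖²`. -/
abbrev Profile (N T : ℕ) := PiLp 2 (fun _ : Fin N => Vec T)

/-- Average action `x̄ = (1/N) ∑ₙ xₙ`. -/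
def avg {N T : ℕ} (x : Profile N T) : Vec T := (1 / (N : ℝ)) • ∑ n, x n

/-- `x̄₋ₙ = (1/N) ∑_{m ≠ n} xₘ`. -/
def avgOther {N T : ℕ} (x : Profile N T) (n : Fin N) : Vec T :=
  (1 / (N : ℝ)) • ∑ m ∈ Finset.univ.erase n, x m

/-- Feasible profiles satisfying the coupling constraint: `X(A)`. -/
def XA {N T : ℕ} (Xset : Fin N → Set (Vec T)) (A : Set (Vec T)) : Set (Profile N T) :=
  {x | (∀ n, x n ∈ Xset n) ∧ avg x ∈ A}

/-- `Φ(x) = ∏ₙ ∂₁fₙ(xₙ, x̄)`. -/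
def Phi {N T : ℕ} (f : Fin N → Vec T → Vec T → ℝ) (x : Profile N T) : Set (Profile N T) :=
  {g | ∀ n, g n ∈ subdiff (fun y => f n y (avg x)) (x n)}

/-- `Φ̂(x) = ∏ₙ ∂₁f̂ₙ(xₙ, x̄₋ₙ)` where `f̂ₙ(u,a) = fₙ(u, a + u/N)`. -/
def PhiHat {N T : ℕ} (f : Fin N → Vec T → Vec T → ℝ) (x : Profile N T) : Set (Profile N T) :=
  {g | ∀ n, g n ∈ subdiff (fun u => f n u (avgOther x n + (1 / (N : ℝ)) • u)) (x n)}

/-- The vector of resource costs `(c_t(v_t))_t`. -/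
def cVec {T : ℕ} (c : Fin T → ℝ → ℝ) (v : Vec T) : Vec T :=
  WithLp.toLp 2 (fun t => c t (v t))

/-- in a splittable congestion game with convex, nondecreasing,
`βₜ`-strongly increasing resource costs and concave utilities, `Φ` is
`(min_t βₜ)`-aggregatively strongly monotone on `X`. -/
theorem congestion_phi_aggregatively_strongly_monotone (N T : ℕ) (hN : 0 < N) (hT : 0 < T)
    (Xset : Fin N → Set (Vec T))
    (hXne : ∀ n, (Xset n).Nonempty) (hXconv : ∀ n, Convex ℝ (Xset n))
    (hXcomp : ∀ n, IsCompact (Xset n))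
    (c : Fin T → ℝ → ℝ)
    (hcconv : ∀ t, ConvexOn ℝ Set.univ (c t)) (hcmono : ∀ t, Monotone (c t))
    (βt : Fin T → ℝ) (hβt : ∀ t, 0 < βt t)
    (hstr : ∀ t a b, βt t * (a - b) ^ 2 ≤ (c t a - c t b) * (a - b))
    (un : Fin N → Vec T → ℝ) (hconc : ∀ n, ConcaveOn ℝ Set.univ (un n))
    (x y : Profile N T) (hx : ∀ n, x n ∈ Xset n) (hy : ∀ n, y n ∈ Xset n)
    (g h : Profile N T)
    (hg : ∀ n, ∃ q ∈ subdiff (fun u => -un n u) (x n), g n = cVec c (avg x) + q)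
    (hh : ∀ n, ∃ q ∈ subdiff (fun u => -un n u) (y n), h n = cVec c (avg y) + q) :
    (N : ℝ) * (⨅ t, βt t) * ‖avg x - avg y‖ ^ 2 ≤ ∑ n, ⟪g n - h n, x n - y n⟫ := by
  have hNpos : (0:ℝ) < N := by exact_mod_cast hN
  have hNne : (N:ℝ) ≠ 0 := ne_of_gt hNpos
  haveI : Nonempty (Fin T) := ⟨⟨0, hT⟩⟩
  choose q hq hgq using hg
  choose p hp hhp using hh
  set C := cVec c (avg x) - cVec c (avg y) with hC
  set d := avg x - avg y with hd
  have key : ∀ n, ⟪g n - h n, x n - y n⟫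
      = ⟪C, x n - y n⟫ + ⟪q n - p n, x n - y n⟫ := by
    intro n
    rw [hgq n, hhp n]
    have e : cVec c (avg x) + q n - (cVec c (avg y) + p n) = C + (q n - p n) := by
      rw [hC]; abel
    rw [e, inner_add_left]
  have hmono : ∀ n, 0 ≤ ⟪q n - p n, x n - y n⟫ := by
    intro n
    have h1 := hq n (y n)
    have h2 := hp n (x n)
    have e1 : ⟪q n, y n - x n⟫ = -⟪q n, x n - y n⟫ := by
      rw [show y n - x n = -(x n - y n) by abel, inner_neg_right]
    rw [inner_sub_left]
    simp only [e1] at h1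
    dsimp only at h1 h2
    linarith
  have hsumd : ∑ n, (x n - y n) = (N:ℝ) • d := by
    rw [Finset.sum_sub_distrib, hd, avg, avg, smul_sub, smul_smul, smul_smul,
      mul_one_div_cancel hNne, one_smul, one_smul]
  have hsum : ∑ n, ⟪g n - h n, x n - y n⟫
      = (N:ℝ) * ⟪C, d⟫ + ∑ n, ⟪q n - p n, x n - y n⟫ := by
    simp_rw [key]
    rw [Finset.sum_add_distrib, ← inner_sum, hsumd, real_inner_smul_right]
  have hCd : (⨅ t, βt t) * ‖d‖^2 ≤ ⟪C, d⟫ := by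
    have hβle : ∀ t, (⨅ s, βt s) ≤ βt t := fun t =>
      ciInf_le (Set.Finite.bddBelow (Set.finite_range βt)) t
    have hnorm : ‖d‖^2 = ∑ t, d t ^ 2 := by
      rw [← real_inner_self_eq_norm_sq, PiLp.inner_apply]
      simp [sq]
    rw [hnorm, Finset.mul_sum, PiLp.inner_apply]
    apply Finset.sum_le_sum
    intro t _
    have hdt : d t = avg x t - avg y t := by
      rw [hd]; rfl
    have hCt : C t = c t (avg x t) - c t (avg y t) := by
      rw [hC]; rfl
    have h1 : βt t * (d t)^2 ≤ (c t (avg x t) - c t (avg y t)) * (d t) := by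
      rw [hdt]; exact hstr t (avg x t) (avg y t)
    have h2 : (⨅ s, βt s) * d t ^ 2 ≤ βt t * d t ^ 2 :=
      mul_le_mul_of_nonneg_right (hβle t) (sq_nonneg _)
    calc (⨅ s, βt s) * d t ^ 2 ≤ (c t (avg x t) - c t (avg y t)) * (d t) := le_trans h2 h1
      _ = ⟪C t, d t⟫ := by rw [hCt]; simp [RCLike.inner_apply]; ring
  have hnn : 0 ≤ ∑ n, ⟪q n - p n, x n - y n⟫ :=
    Finset.sum_nonneg fun n _ => hmono n
  rw [hsum, mul_assoc]
  have := mul_le_mul_of_nonneg_left hCd (le_of_lt hNpos)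
  linarith
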